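/- arXiv:2409.10348 — 6 statements merged into one kernel-verified Lean document; each statement's English description precedes it below -/
import Mathlib

section
/- The following three identities hold in End_ℝ(R): (P¹)² − P² ∘ P⁰ = D_x² − M_x ∘ D_y; P² ∘ P¹ − P³ ∘ P⁰ + 2·id = 2 M_t ∘ D_x² + M_x ∘ D_x + M_{3y − 2tx} ∘ D_y + 2·id; (P²)² − P³ ∘ P¹ = M_{t²} ∘ D_x² + M_{3y + tx} ∘ D_x + M_{t(3y − tx)} ∘ D_y + M_{x² + 2t}. -/
open MvPolynomial

noncomputable section

abbrev R3 : Type := MvPolynomial (Fin 3) ℝ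

def t : R3 := X 0
def x : R3 := X 1
def y : R3 := X 2

def Dx : Module.End ℝ R3 := (pderiv (1 : Fin 3)).toLinearMap
def Dy : Module.End ℝ R3 := (pderiv (2 : Fin 3)).toLinearMap

/-- Multiplication by a polynomial, as a linear endomorphism. -/
def M (a : R3) : Module.End ℝ R3 := LinearMap.mulLeft ℝ a

def P3 : Module.End ℝ R3 := 3 • (M (t ^ 2) * Dx) + M (t ^ 3) * Dy - 3 • M (y - t * x)
def P2 : Module.End ℝ R3 := 2 • (M t * Dx) + M (t ^ 2) * Dy + M x
def P1 : Module.End ℝ R3 := Dx + M t * Dy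
def P0 : Module.End ℝ R3 := Dy

lemma pd_comm (i j : Fin 3) (p : R3) :
    pderiv i (pderiv j p) = pderiv j (pderiv i p) := by
  induction p using MvPolynomial.induction_on with
  | C a => simp
  | add p q hp hq => simp [hp, hq]
  | mul_X p n hp =>
    simp only [pderiv_mul, hp, pderiv_X, Pi.single_apply]
    split_ifs <;> simp_all [Pi.single_apply] <;> ring

lemma pd_two (i : Fin 3) : pderiv i (2 : R3) = 0 := by
  rw [show (2 : R3) = C 2 from (map_ofNat C 2).symm]; exact pderiv_C

/-- Three operator identities in `End_ℝ(ℝ[t,x,y])`: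
`(P¹)² − P²P⁰ = D_x² − M_x D_y`,
`P²P¹ − P³P⁰ + 2 = 2 M_t D_x² + M_x D_x + M_{3y−2tx} D_y + 2`, and
`(P²)² − P³P¹ = M_{t²} D_x² + M_{3y+tx} D_x + M_{t(3y−tx)} D_y + M_{x²+2t}`. -/
theorem stmt3 :
    (P1 ^ 2 - P2 * P0 = Dx ^ 2 - M x * Dy) ∧
    (P2 * P1 - P3 * P0 + 2 = 2 • (M t * Dx ^ 2) + M x * Dx + M (3 • y - 2 • (t * x)) * Dy + 2) ∧
    (P2 ^ 2 - P3 * P1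
      = M (t ^ 2) * Dx ^ 2 + M (3 • y + t * x) * Dx + M (t * (3 • y - t * x)) * Dy
        + M (x ^ 2 + 2 • t)) := by
  refine ⟨?_, ?_, ?_⟩ <;>
  · refine LinearMap.ext fun p => ?_
    simp [P3, P2, P1, P0, Dx, Dy, M, t, x, y, pow_two, pderiv_mul, pd_two,
      pderiv_X_self, pderiv_X_of_ne, pd_comm 2 1, mul_add, add_mul, sub_mul, mul_sub,
      smul_sub, smul_add]
    ring
end
end

section
/- Define P̂t := (P¹)² − P²P⁰, D̂ := P²P¹ − P³P⁰ + 2, K̂ := (P²)² − P³P¹ in End_ℝ(R), and set C := D̂² − 2(K̂ ∘ P̂t + P̂t ∘ K̂). Then C = (P³)²(P⁰)² − 6 P³P²P¹P⁰ − 3 (P²)²(P¹)² + 4 (P²)³P⁰ + 4 P³(P¹)³ + 3 P²P¹ − 9 P³P⁰, and moreover, as a differential operator, C = −12 M_y ∘ D_x³ − 3 M_{x²} ∘ D_x² + 18 M_{xy} ∘ D_x ∘ D_y + 9 M_{y²} ∘ D_y² + 3 M_x ∘ D_x + M_{4x³ + 27y} ∘ D_y; in particular C is a differential operator of order three, although its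 expression as a polynomial in P⁰, P¹, P², P³ has degree four. -/
open MvPolynomial

noncomputable section

/-- `P̂t := (P¹)² − P²P⁰`. -/
def Pthat : Module.End ℝ R3 := P1 ^ 2 - P2 * P0
/-- `D̂ := P²P¹ − P³P⁰ + 2`. -/
def Dhat : Module.End ℝ R3 := P2 * P1 - P3 * P0 + 2
/-- `K̂ := (P²)² − P³P¹`. -/
def Khat : Module.End ℝ R3 := P2 ^ 2 - P3 * P1
/-- The Casimir-type operator `C := D̂² − 2(K̂ P̂t + P̂t K̂)`. -/
def Cas : Module.End ℝ R3 := Dhat ^ 2 - 2 • (Khat * Pthat + Pthat * Khat)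

/-! The operators `P⁰, P¹, P², P³` satisfy the canonical commutation relations
`[P¹, P²] = 1`, `[P⁰, P³] = -3`, all other pairs commuting. The first identity follows from these
relations alone: moving every `P³` to the left of every `P²`, and so on, brings `C` to the normal
ordered quartic. The second identity is then a direct computation of that quartic on polynomials,
in which all the dependence on `t` cancels. -/

theorem casimir_eq_quartic_of_commutators {A : Type*} [Ring A] {a₀ a₁ a₂ a₃ : A}
    (h₀₁ : a₀ * a₁ = a₁ * a₀) (h₀₂ : a₀ * a₂ = a₂ * a₀) (h₀₃ : a₀ * a₃ = a₃ * a₀ - 3)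
    (h₁₂ : a₁ * a₂ = a₂ * a₁ + 1) (h₁₃ : a₁ * a₃ = a₃ * a₁) (h₂₃ : a₂ * a₃ = a₃ * a₂) :
    (a₂ * a₁ - a₃ * a₀ + 2) ^ 2
        - 2 • ((a₂ ^ 2 - a₃ * a₁) * (a₁ ^ 2 - a₂ * a₀) + (a₁ ^ 2 - a₂ * a₀) * (a₂ ^ 2 - a₃ * a₁))
      = a₃ ^ 2 * a₀ ^ 2 - 6 • (a₃ * a₂ * a₁ * a₀) - 3 • (a₂ ^ 2 * a₁ ^ 2)
        + 4 • (a₂ ^ 3 * a₀) + 4 • (a₃ * a₁ ^ 3) + 3 • (a₂ * a₁) - 9 • (a₃ * a₀) := by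
  have h₀₂' (z : A) : a₀ * (a₂ * z) = a₂ * (a₀ * z) := by rw [← mul_assoc, h₀₂, mul_assoc]
  have h₀₃' (z : A) : a₀ * (a₃ * z) = a₃ * (a₀ * z) - 3 * z := by
    rw [← mul_assoc, h₀₃, sub_mul, mul_assoc]
  have h₁₂' (z : A) : a₁ * (a₂ * z) = a₂ * (a₁ * z) + z := by
    rw [← mul_assoc, h₁₂, add_mul, mul_assoc, one_mul]
  have h₁₃' (z : A) : a₁ * (a₃ * z) = a₃ * (a₁ * z) := by rw [← mul_assoc, h₁₃, mul_assoc]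
  have h₂₃' (z : A) : a₂ * (a₃ * z) = a₃ * (a₂ * z) := by rw [← mul_assoc, h₂₃, mul_assoc]
  simp only [pow_succ, pow_zero, one_mul, mul_assoc, mul_add, add_mul, mul_sub, sub_mul,
    nsmul_eq_mul, Nat.cast_ofNat, h₀₁, h₀₂, h₁₂, h₀₂', h₀₃', h₁₂', h₁₃', h₂₃']
  -- `noncomm_ring` does not identify `2 • 2` with `4 • 1`; `norm_num` and `abel` cancel them
  noncomm_ring
  norm_num
  abel

theorem MvPolynomial.pderiv_pderiv_comm {R σ : Type*} [CommSemiring R] (i j : σ)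
    (p : MvPolynomial σ R) : pderiv i (pderiv j p) = pderiv j (pderiv i p) := by
  classical
  induction p using MvPolynomial.induction_on with
  | C a => simp
  | add p q hp hq => simp [hp, hq]
  | mul_X p k hp =>
    simp only [pderiv_mul, map_add, hp, pderiv_X, Pi.single_apply]
    split_ifs <;> simp [add_comm, add_left_comm]

lemma M_apply (a p : R3) : M a p = a * p := rfl
lemma Dx_apply (p : R3) : Dx p = pderiv 1 p := rfl
lemma Dy_apply (p : R3) : Dy p = pderiv 2 p := rfl

lemma P0_apply (p : R3) : P0 p = pderiv 2 p := rfl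
lemma P1_apply (p : R3) : P1 p = pderiv 1 p + t * pderiv 2 p := rfl
lemma P2_apply (p : R3) : P2 p = 2 • (t * pderiv 1 p) + t ^ 2 * pderiv 2 p + x * p := rfl
lemma P3_apply (p : R3) :
    P3 p = 3 • (t ^ 2 * pderiv 1 p) + t ^ 3 * pderiv 2 p - 3 • ((y - t * x) * p) := rfl

lemma P_commutation_relations :
    P0 * P1 = P1 * P0 ∧ P0 * P2 = P2 * P0 ∧ P0 * P3 = P3 * P0 - 3 ∧
      P1 * P2 = P2 * P1 + 1 ∧ P1 * P3 = P3 * P1 ∧ P2 * P3 = P3 * P2 := by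
  refine ⟨?_, ?_, ?_, ?_, ?_, ?_⟩ <;> refine LinearMap.ext fun p => ?_ <;>
  simp only [pow_succ, pow_zero, one_mul, Module.End.mul_apply, LinearMap.add_apply,
    LinearMap.sub_apply, Module.End.one_apply, Module.End.ofNat_apply,
    P0_apply, P1_apply, P2_apply, P3_apply, map_add, map_sub, map_nsmul, pderiv_mul, t, x, y,
    pderiv_X_self, pderiv_X_of_ne (show (0 : Fin 3) ≠ 1 by decide),
    pderiv_X_of_ne (show (0 : Fin 3) ≠ 2 by decide),
    pderiv_X_of_ne (show (1 : Fin 3) ≠ 2 by decide),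
    pderiv_X_of_ne (show (2 : Fin 3) ≠ 1 by decide), pderiv_pderiv_comm (R := ℝ) (2 : Fin 3) 1] <;>
  ring

lemma quartic_eq_differential_operator :
    P3 ^ 2 * P0 ^ 2 - 6 • (P3 * P2 * P1 * P0) - 3 • (P2 ^ 2 * P1 ^ 2)
        + 4 • (P2 ^ 3 * P0) + 4 • (P3 * P1 ^ 3) + 3 • (P2 * P1) - 9 • (P3 * P0)
      = -(12 • (M y * Dx ^ 3)) - 3 • (M (x ^ 2) * Dx ^ 2) + 18 • (M (x * y) * Dx * Dy)
        + 9 • (M (y ^ 2) * Dy ^ 2) + 3 • (M x * Dx) + M (4 • x ^ 3 + 27 • y) * Dy := by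
  refine LinearMap.ext fun p => ?_
  simp only [pow_succ, pow_zero, one_mul, Module.End.mul_apply, LinearMap.add_apply,
    LinearMap.sub_apply, LinearMap.smul_apply, LinearMap.neg_apply,
    P0_apply, P1_apply, P2_apply, P3_apply, M_apply, Dx_apply, Dy_apply,
    map_add, map_sub, map_nsmul, map_zero, pderiv_mul, t, x, y,
    pderiv_X_self, pderiv_X_of_ne (show (0 : Fin 3) ≠ 1 by decide),
    pderiv_X_of_ne (show (0 : Fin 3) ≠ 2 by decide),
    pderiv_X_of_ne (show (1 : Fin 3) ≠ 2 by decide),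
    pderiv_X_of_ne (show (2 : Fin 3) ≠ 1 by decide), pderiv_pderiv_comm (R := ℝ) (2 : Fin 3) 1]
  ring

/-- The operator `C = D̂² − 2(K̂ P̂t + P̂t K̂)` equals the degree-four
polynomial `(P³)²(P⁰)² − 6 P³P²P¹P⁰ − 3 (P²)²(P¹)² + 4 (P²)³P⁰ + 4 P³(P¹)³ + 3 P²P¹ − 9 P³P⁰`
in the generators, and, as a differential operator, equals the third-order operator
`−12 M_y D_x³ − 3 M_{x²} D_x² + 18 M_{xy} D_x D_y + 9 M_{y²} D_y² + 3 M_x D_x + M_{4x³+27y} D_y`. -/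
theorem stmt4 :
    (Cas = P3 ^ 2 * P0 ^ 2 - 6 • (P3 * P2 * P1 * P0) - 3 • (P2 ^ 2 * P1 ^ 2)
      + 4 • (P2 ^ 3 * P0) + 4 • (P3 * P1 ^ 3) + 3 • (P2 * P1) - 9 • (P3 * P0)) ∧
    (Cas = -(12 • (M y * Dx ^ 3)) - 3 • (M (x ^ 2) * Dx ^ 2) + 18 • (M (x * y) * Dx * Dy)
      + 9 • (M (y ^ 2) * Dy ^ 2) + 3 • (M x * Dx) + M (4 • x ^ 3 + 27 • y) * Dy) := by
  obtain ⟨h₀₁, h₀₂, h₀₃, h₁₂, h₁₃, h₂₃⟩ := P_commutation_relations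
  have casimir_eq_quartic := casimir_eq_quartic_of_commutators h₀₁ h₀₂ h₀₃ h₁₂ h₁₃ h₂₃
  exact ⟨casimir_eq_quartic, casimir_eq_quartic.trans quartic_eq_differential_operator⟩
end
end

section
/- For every n ∈ ℕ, the natural number ∑_{k=0}^{n} C(k+3, 3) + ∑_{k=1}^{⌊n/3⌋} C(n−3(k−1), 3) equals (1/18)(n+1)(n+3)(n²+4n+6) if n ≡ 0 or 2 (mod 3), and equals (1/18)(n+2)²(n²+4n+5) if n ≡ 1 (mod 3), where C(m, 3) denotes the binomial coefficient 'm choose 3'. -/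
lemma c2aux (m : ℕ) : 2 * Nat.choose (m + 2) 2 = (m + 1) * (m + 2) := by
  induction m with
  | zero => decide
  | succ k ih =>
    rw [show k + 1 + 2 = (k + 2) + 1 from rfl, Nat.choose_succ_succ (k + 2) 1,
      Nat.choose_one_right]
    nlinarith [ih]

lemma c3aux (m : ℕ) : 6 * Nat.choose (m + 3) 3 = (m + 1) * (m + 2) * (m + 3) := by
  induction m with
  | zero => decide
  | succ k ih =>
    rw [show k + 1 + 3 = (k + 3) + 1 from rfl, Nat.choose_succ_succ (k + 3) 2]
    have h2 := c2aux (k + 1)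
    nlinarith [ih, h2]

lemma keyIcc (n : ℕ) : (∑ k ∈ Finset.Icc 1 (n / 3), Nat.choose (n - 3 * (k - 1)) 3)
    = ∑ j ∈ Finset.range (n / 3), Nat.choose (n - 3 * j) 3 := by
  rw [← Finset.Ico_add_one_right_eq_Icc, Finset.sum_Ico_eq_sum_range]
  simp

/-- For every `n`,
`∑_{k=0}^{n} C(k+3,3) + ∑_{k=1}^{⌊n/3⌋} C(n−3(k−1),3)` equals
`(1/18)(n+1)(n+3)(n²+4n+6)` if `n ≡ 0, 2 (mod 3)` and `(1/18)(n+2)²(n²+4n+5)` if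
`n ≡ 1 (mod 3)` (stated multiplied through by 18). -/
theorem stmt7 (n : ℕ) :
    18 * ((∑ k ∈ Finset.range (n + 1), Nat.choose (k + 3) 3)
        + ∑ k ∈ Finset.Icc 1 (n / 3), Nat.choose (n - 3 * (k - 1)) 3)
      = if n % 3 = 1 then (n + 2) ^ 2 * (n ^ 2 + 4 * n + 5)
        else (n + 1) * (n + 3) * (n ^ 2 + 4 * n + 6) := by
  induction n using Nat.strong_induction_on with
  | _ n ih =>
    obtain _ | (_ | (_ | m)) := n
    · decide
    · decide
    · decide
    · have IH := ih m (by omega)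
      rw [keyIcc] at IH ⊢
      have hdiv : (m + 3) / 3 = m / 3 + 1 := by omega
      have hS2 : (∑ j ∈ Finset.range ((m + 3) / 3), Nat.choose (m + 3 - 3 * j) 3)
          = (∑ j ∈ Finset.range (m / 3), Nat.choose (m - 3 * j) 3)
            + Nat.choose (m + 3) 3 := by
        rw [hdiv, Finset.sum_range_succ']
        congr 1
        apply Finset.sum_congr rfl
        intro j hj
        simp only [Finset.mem_range] at hj
        congr 1
        omega
      have hS1 : (∑ k ∈ Finset.range (m + 3 + 1), Nat.choose (k + 3) 3)
          = (∑ k ∈ Finset.range (m + 1), Nat.choose (k + 3) 3)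
            + (Nat.choose (m + 4) 3 + Nat.choose (m + 5) 3 + Nat.choose (m + 6) 3) := by
        rw [show m + 3 + 1 = (m + 1) + 1 + 1 + 1 from rfl, Finset.sum_range_succ,
          Finset.sum_range_succ, Finset.sum_range_succ]
        ring
      have hmod : (m + 3) % 3 = m % 3 := by omega
      have h3 := c3aux m
      have h4 := c3aux (m + 1)
      have h5 := c3aux (m + 2)
      have h6 := c3aux (m + 3)
      rw [hS1, hS2, hmod]
      by_cases h : m % 3 = 1 <;> simp only [h, if_true, if_false] at IH ⊢
      · zify at IH h3 h4 h5 h6 ⊢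
        linear_combination IH + 3 * h3 + 3 * h4 + 3 * h5 + 3 * h6
      · zify at IH h3 h4 h5 h6 ⊢
        linear_combination IH + 3 * h3 + 3 * h4 + 3 * h5 + 3 * h6
end

section
/- The polynomial x₃² x₀² − 6 x₃ x₂ x₁ x₀ − 3 x₂² x₁² + 4 x₂³ x₀ + 4 x₃ x₁³ is irreducible in the polynomial ring ℝ[x₀, x₁, x₂, x₃] (MvPolynomial (Fin 4) ℝ). -/
/-!
Up to a constant, the polynomial is the discriminant of the binary cubic
`x₀u³ + 3x₁u²v + 3x₂uv² + x₃v³`. As a polynomial in `x₀` over `ℝ[x₁, x₂, x₃]` it is the quadratic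
`x₃² x₀² + (4x₂³ − 6x₁x₂x₃) x₀ + (4x₁³x₃ − 3x₁²x₂²)`. Its leading coefficient `x₃²` and its middle
coefficient share no factor, so it is primitive, and a primitive quadratic over a domain is
irreducible unless it splits into two linear factors, in which case its discriminant is a square.
Here the discriminant is `16 (x₂² − x₁x₃)³`, which takes the value `-16` at `x₂ = 0, x₁ = x₃ = 1`.
-/

open MvPolynomial

namespace Polynomial

variable {R : Type*} [CommRing R]

theorem coeff_quadratic_zero (a b c : R) : (C a * X ^ 2 + C b * X + C c).coeff 0 = c := by
  simp

theorem coeff_quadratic_one (a b c : R) : (C a * X ^ 2 + C b * X + C c).coeff 1 = b := by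
  simp

theorem coeff_quadratic_two (a b c : R) : (C a * X ^ 2 + C b * X + C c).coeff 2 = a := by
  simp

theorem discrim_eq_sq_of_quadratic_eq_mul {a b c p q r s : R}
    (h : C a * X ^ 2 + C b * X + C c = (C p * X + C q) * (C r * X + C s)) :
    discrim a b c = (p * s - q * r) ^ 2 := by
  rw [show (C p * X + C q) * (C r * X + C s)
      = C (p * r) * X ^ 2 + C (p * s + q * r) * X + C (q * s) by
    simp only [map_add, map_mul]; ring] at h
  have h2 := congrArg (coeff · 2) h
  have h1 := congrArg (coeff · 1) h
  have h0 := congrArg (coeff · 0) h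
  simp only [coeff_quadratic_two, coeff_quadratic_one, coeff_quadratic_zero] at h2 h1 h0
  rw [discrim, h2, h1, h0]
  ring

theorem IsPrimitive.natDegree_pos_of_dvd {f g : R[X]} (hf : f.IsPrimitive) (hg : g ∣ f)
    (hu : ¬IsUnit g) : 0 < g.natDegree := by
  by_contra! h0
  rw [eq_C_of_natDegree_eq_zero (Nat.le_zero.mp h0)] at hg hu
  exact hu (isUnit_C.mpr (hf _ hg))

theorem isPrimitive_of_coeff_eq_prime_pow [IsDomain R] {f : R[X]} {p : R} (hp : Prime p)
    {n i j : ℕ} (hi : f.coeff i = p ^ n) (hj : ¬p ∣ f.coeff j) : f.IsPrimitive := by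
  intro r hr
  rw [C_dvd_iff_dvd_coeff] at hr
  obtain ⟨k, -, hk⟩ := (dvd_prime_pow hp n).mp (hi ▸ hr i)
  rcases k.eq_zero_or_pos with rfl | hk0
  · exact associated_one_iff_isUnit.mp (pow_zero p ▸ hk)
  · exact absurd ((dvd_pow_self p hk0.ne').trans (hk.symm.dvd.trans (hr j))) hj

theorem irreducible_quadratic_of_discrim_ne_sq [IsDomain R] {a b c : R} (ha : a ≠ 0)
    (hf : (C a * X ^ 2 + C b * X + C c).IsPrimitive) (hd : ∀ s, discrim a b c ≠ s ^ 2) :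
    Irreducible (C a * X ^ 2 + C b * X + C c) := by
  have hdeg := natDegree_quadratic (b := b) (c := c) ha
  refine ⟨fun hu => by simp [natDegree_eq_zero_of_isUnit hu] at hdeg, fun g h hgh => ?_⟩
  by_contra! ⟨hg, hh⟩
  have hg0 := hf.natDegree_pos_of_dvd (hgh ▸ dvd_mul_right g h) hg
  have hh0 := hf.natDegree_pos_of_dvd (hgh ▸ dvd_mul_left h g) hh
  have hsum : g.natDegree + h.natDegree = 2 := by
    rw [← natDegree_mul (left_ne_zero_of_mul (hgh ▸ hf.ne_zero))
      (right_ne_zero_of_mul (hgh ▸ hf.ne_zero)), ← hgh, hdeg]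
  rw [eq_X_add_C_of_natDegree_le_one (by omega : g.natDegree ≤ 1),
    eq_X_add_C_of_natDegree_le_one (by omega : h.natDegree ≤ 1)] at hgh
  exact hd _ (discrim_eq_sq_of_quadratic_eq_mul hgh)

end Polynomial

namespace BinaryCubic

lemma finSuccEquiv_discriminant :
    finSuccEquiv ℝ 3 ((X 3) ^ 2 * (X 0) ^ 2 - 6 * X 3 * X 2 * X 1 * X 0
      - 3 * (X 2) ^ 2 * (X 1) ^ 2 + 4 * (X 2) ^ 3 * X 0 + 4 * X 3 * (X 1) ^ 3) =
      Polynomial.C (X 2 ^ 2) * Polynomial.X ^ 2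
        + Polynomial.C (4 * X 1 ^ 3 - 6 * X 2 * X 1 * X 0) * Polynomial.X
        + Polynomial.C (4 * X 2 * X 0 ^ 3 - 3 * X 1 ^ 2 * X 0 ^ 2) := by
  simp only [map_add, map_sub, map_mul, map_pow, map_ofNat, finSuccEquiv_X_zero]
  simp only [show (1 : Fin 4) = Fin.succ 0 from rfl, show (2 : Fin 4) = Fin.succ 1 from rfl,
    show (3 : Fin 4) = Fin.succ 2 from rfl, finSuccEquiv_X_succ]
  ring

lemma X_two_not_dvd : ¬(X 2 : MvPolynomial (Fin 3) ℝ) ∣ 4 * X 1 ^ 3 - 6 * X 2 * X 1 * X 0 := by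
  intro h
  have := map_dvd (eval ![1, 1, 0]) h
  norm_num [Matrix.cons_val_two, Matrix.tail_cons, Matrix.head_cons] at this

lemma discrim_ne_sq (s : MvPolynomial (Fin 3) ℝ) :
    discrim (X 2 ^ 2) (4 * X 1 ^ 3 - 6 * X 2 * X 1 * X 0)
      (4 * X 2 * X 0 ^ 3 - 3 * X 1 ^ 2 * X 0 ^ 2) ≠ s ^ 2 := by
  rw [discrim, show (4 * X 1 ^ 3 - 6 * X 2 * X 1 * X 0) ^ 2
      - 4 * X 2 ^ 2 * (4 * X 2 * X 0 ^ 3 - 3 * X 1 ^ 2 * X 0 ^ 2)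
      = 16 * (X 1 ^ 2 - X 2 * X 0 : MvPolynomial (Fin 3) ℝ) ^ 3 by ring]
  intro h
  have := congrArg (eval ![1, 0, 1]) h
  norm_num [Matrix.cons_val_two, Matrix.tail_cons, Matrix.head_cons] at this
  nlinarith [sq_nonneg (eval ![1, 0, 1] s)]

end BinaryCubic

/-- The polynomial
`x₃² x₀² − 6 x₃x₂x₁x₀ − 3 x₂²x₁² + 4 x₂³x₀ + 4 x₃x₁³` is irreducible in `ℝ[x₀,x₁,x₂,x₃]`. -/
theorem stmt17 :
    Irreducible ((X 3) ^ 2 * (X 0) ^ 2 - 6 * X 3 * X 2 * X 1 * X 0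
      - 3 * (X 2) ^ 2 * (X 1) ^ 2 + 4 * (X 2) ^ 3 * X 0 + 4 * X 3 * (X 1) ^ 3
      : MvPolynomial (Fin 4) ℝ) := by
  rw [← MulEquiv.irreducible_iff (finSuccEquiv ℝ 3), BinaryCubic.finSuccEquiv_discriminant]
  refine Polynomial.irreducible_quadratic_of_discrim_ne_sq (pow_ne_zero 2 (X_ne_zero 2)) ?_
    BinaryCubic.discrim_ne_sq
  refine Polynomial.isPrimitive_of_coeff_eq_prime_pow X_prime
    (Polynomial.coeff_quadratic_two _ _ _) (j := 1) ?_
  rw [Polynomial.coeff_quadratic_one]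
  exact BinaryCubic.X_two_not_dvd
end

section
/- Let α, β, γ, δ ∈ ℝ with αδ − βγ = 1, let λ₀, λ₁, λ₂, λ₃, σ ∈ ℝ with σ ≠ 0, and let h, f : ℝ³ → ℝ be smooth functions each satisfying the remarkable Fokker–Planck equation ∂_t w + x ∂_y w = ∂_x² w on all of ℝ³. For (t,x,y) with γt + δ ≠ 0 set x̂ := x + 3λ₃t² + 2λ₂t + λ₁ and ŷ := y + λ₃t³ + λ₂t² + λ₁t + λ₀, and define u(t,x,y) := σ⁻¹ (γt+δ)⁻² · exp(λ₂x − 3λ₃(y − tx) + 3λ₃²t³ + 3λ₃λ₂t² + λ₂²t) · exp(−γx̂²/(γt+δ) + 3γ²x̂ŷ/(γt+δ)² − 3γ³ŷ²/(γt+δ)³) · h((αt+β)/(γt+δ), x̂/(γt+δ) − 3γŷ/(γt+δ)², ŷ/(γt+δ)³) − f(t,x,y). Then u satisfies ∂_t u + x ∂_y u = ∂_x² u at every point (t,x,y) with γt + δ ≠ 0. -/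
noncomputable section

/-- `u` (written curried) satisfies the remarkable Fokker–Planck equation
`∂_t u + x ∂_y u = ∂_x² u` at the point `(t,x,y)`. -/
def FPAt (u : ℝ → ℝ → ℝ → ℝ) (t x y : ℝ) : Prop :=
  deriv (fun s => u s x y) t + x * deriv (fun s => u t x s) y
    = deriv (fun s => deriv (fun r => u t r y) s) x

private lemma hasDerivAt_comp3 {Q : ℝ × ℝ × ℝ → ℝ} (hQ : ContDiff ℝ (⊤ : ℕ∞) Q)
    {c : ℝ → ℝ × ℝ × ℝ} {c' : ℝ × ℝ × ℝ} {s : ℝ} (hc : HasDerivAt c c' s) :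
    HasDerivAt (fun r => Q (c r)) (fderiv ℝ Q (c s) c') s := by
  have := (hQ.differentiable (by simp) (c s)).hasFDerivAt.comp_hasDerivAt s hc
  exact this

private lemma clm_apply3 (L : ℝ × ℝ × ℝ →L[ℝ] ℝ) (a b c : ℝ) :
    L (a, b, c) = a * L (1, 0, 0) + b * L (0, 1, 0) + c * L (0, 0, 1) := by
  have h : (a, b, c) = a • ((1:ℝ), (0:ℝ), (0:ℝ)) + b • ((0:ℝ), (1:ℝ), (0:ℝ))
      + c • ((0:ℝ), (0:ℝ), (1:ℝ)) := by simp [Prod.ext_iff]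
  rw [h, map_add, map_add, map_smul, map_smul, map_smul]
  simp [smul_eq_mul]

private lemma fp_fderiv {w : ℝ → ℝ → ℝ → ℝ}
    (hsm : ContDiff ℝ (⊤ : ℕ∞) (fun p : ℝ × ℝ × ℝ => w p.1 p.2.1 p.2.2))
    (hsol : ∀ t x y : ℝ, FPAt w t x y) (p : ℝ × ℝ × ℝ) :
    fderiv ℝ (fun q : ℝ × ℝ × ℝ => w q.1 q.2.1 q.2.2) p (1, 0, 0)
      + p.2.1 * fderiv ℝ (fun q : ℝ × ℝ × ℝ => w q.1 q.2.1 q.2.2) p (0, 0, 1)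
      = fderiv ℝ (fun q : ℝ × ℝ × ℝ =>
          fderiv ℝ (fun q' : ℝ × ℝ × ℝ => w q'.1 q'.2.1 q'.2.2) q (0, 1, 0)) p (0, 1, 0) := by
  obtain ⟨a, b, c⟩ := p
  set W : ℝ × ℝ × ℝ → ℝ := fun q => w q.1 q.2.1 q.2.2 with hW
  have hsol' := hsol a b c
  unfold FPAt at hsol'
  have h1 : deriv (fun s => w s b c) a = fderiv ℝ W (a, b, c) (1, 0, 0) := by
    have hc : HasDerivAt (fun s : ℝ => (s, b, c)) ((1:ℝ), (0:ℝ), (0:ℝ)) a :=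
      (hasDerivAt_id a).prodMk ((hasDerivAt_const a b).prodMk (hasDerivAt_const a c))
    exact (hasDerivAt_comp3 hsm hc).deriv
  have h3 : deriv (fun s => w a b s) c = fderiv ℝ W (a, b, c) (0, 0, 1) := by
    have hc : HasDerivAt (fun s : ℝ => (a, b, s)) ((0:ℝ), (0:ℝ), (1:ℝ)) c :=
      (hasDerivAt_const c a).prodMk ((hasDerivAt_const c b).prodMk (hasDerivAt_id c))
    exact (hasDerivAt_comp3 hsm hc).deriv
  have h2 : ∀ s : ℝ, deriv (fun r => w a r c) s = fderiv ℝ W (a, s, c) (0, 1, 0) := by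
    intro s
    have hc : HasDerivAt (fun r : ℝ => (a, r, c)) ((0:ℝ), (1:ℝ), (0:ℝ)) s :=
      (hasDerivAt_const s a).prodMk ((hasDerivAt_id s).prodMk (hasDerivAt_const s c))
    exact (hasDerivAt_comp3 hsm hc).deriv
  have h22 : deriv (fun s => deriv (fun r => w a r c) s) b
      = fderiv ℝ (fun q => fderiv ℝ W q (0, 1, 0)) (a, b, c) (0, 1, 0) := by
    have he : (fun s => deriv (fun r => w a r c) s)
        = fun s => fderiv ℝ W (a, s, c) ((0:ℝ), (1:ℝ), (0:ℝ)) := funext h2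
    rw [he]
    have hQ2 : ContDiff ℝ (⊤ : ℕ∞) (fun q => fderiv ℝ W q ((0:ℝ), (1:ℝ), (0:ℝ))) :=
      (hsm.fderiv_right (by simp)).clm_apply contDiff_const
    have hc : HasDerivAt (fun r : ℝ => (a, r, c)) ((0:ℝ), (1:ℝ), (0:ℝ)) b :=
      (hasDerivAt_const b a).prodMk ((hasDerivAt_id b).prodMk (hasDerivAt_const b c))
    exact (hasDerivAt_comp3 hQ2 hc).deriv
  rw [h1, h3, h22] at hsol'
  exact hsol'

private lemma f_facts {f : ℝ → ℝ → ℝ → ℝ}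
    (hsm : ContDiff ℝ (⊤ : ℕ∞) (fun p : ℝ × ℝ × ℝ => f p.1 p.2.1 p.2.2))
    (hsol : ∀ t x y : ℝ, FPAt f t x y) (t x y : ℝ) :
    ∃ (F1 F2 Fxx : ℝ) (Fx : ℝ → ℝ),
      HasDerivAt (fun s => f s x y) F1 t ∧ HasDerivAt (fun s => f t x s) F2 y ∧
      (∀ s, HasDerivAt (fun r => f t r y) (Fx s) s) ∧ HasDerivAt Fx Fxx x ∧
      F1 + x * F2 = Fxx := by
  set F : ℝ × ℝ × ℝ → ℝ := fun p => f p.1 p.2.1 p.2.2 with hF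
  have hQ2 : ContDiff ℝ (⊤ : ℕ∞) (fun q => fderiv ℝ F q ((0:ℝ), (1:ℝ), (0:ℝ))) :=
    (hsm.fderiv_right (by simp)).clm_apply contDiff_const
  refine ⟨fderiv ℝ F (t, x, y) (1, 0, 0), fderiv ℝ F (t, x, y) (0, 0, 1),
    fderiv ℝ (fun q => fderiv ℝ F q ((0:ℝ), (1:ℝ), (0:ℝ))) (t, x, y) (0, 1, 0),
    fun s => fderiv ℝ F (t, s, y) (0, 1, 0), ?_, ?_, ?_, ?_, ?_⟩
  · exact hasDerivAt_comp3 hsm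
      ((hasDerivAt_id t).prodMk ((hasDerivAt_const t x).prodMk (hasDerivAt_const t y)))
  · exact hasDerivAt_comp3 hsm
      ((hasDerivAt_const y t).prodMk ((hasDerivAt_const y x).prodMk (hasDerivAt_id y)))
  · intro s
    exact hasDerivAt_comp3 hsm
      ((hasDerivAt_const s t).prodMk ((hasDerivAt_id s).prodMk (hasDerivAt_const s y)))
  · exact hasDerivAt_comp3 hQ2
      ((hasDerivAt_const x t).prodMk ((hasDerivAt_id x).prodMk (hasDerivAt_const x y)))
  · exact fp_fderiv hsm hsol (t, x, y)

/-- The transformed solution, with the two exponentials merged into one. -/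
private def Vfun (α β γ δ l0 l1 l2 l3 σ : ℝ) (W : ℝ × ℝ × ℝ → ℝ) (t x y : ℝ) : ℝ :=
  σ⁻¹ * ((γ * t + δ) ^ 2)⁻¹ *
    Real.exp ((l2 * x - 3 * l3 * (y - t * x) + 3 * l3 ^ 2 * t ^ 3
        + 3 * l3 * l2 * t ^ 2 + l2 ^ 2 * t)
      + (-(γ * (x + 3 * l3 * t ^ 2 + 2 * l2 * t + l1) ^ 2) / (γ * t + δ)
        + 3 * γ ^ 2 * (x + 3 * l3 * t ^ 2 + 2 * l2 * t + l1)
            * (y + l3 * t ^ 3 + l2 * t ^ 2 + l1 * t + l0) / (γ * t + δ) ^ 2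
        - 3 * γ ^ 3 * (y + l3 * t ^ 3 + l2 * t ^ 2 + l1 * t + l0) ^ 2 / (γ * t + δ) ^ 3)) *
    W ((α * t + β) / (γ * t + δ),
      (x + 3 * l3 * t ^ 2 + 2 * l2 * t + l1) / (γ * t + δ)
        - 3 * γ * (y + l3 * t ^ 3 + l2 * t ^ 2 + l1 * t + l0) / (γ * t + δ) ^ 2,
      (y + l3 * t ^ 3 + l2 * t ^ 2 + l1 * t + l0) / (γ * t + δ) ^ 3)

set_option maxHeartbeats 4000000 in
private lemma key (α β γ δ l0 l1 l2 l3 σ : ℝ) (hdet : α * δ - β * γ = 1)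
    {w : ℝ → ℝ → ℝ → ℝ}
    (hsm : ContDiff ℝ (⊤ : ℕ∞) (fun p : ℝ × ℝ × ℝ => w p.1 p.2.1 p.2.2))
    (hsol : ∀ t x y : ℝ, FPAt w t x y)
    (t x y : ℝ) (hA : γ * t + δ ≠ 0) :
    ∃ (D1 D2 Dxx : ℝ) (Dx : ℝ → ℝ),
      HasDerivAt
        (fun s => Vfun α β γ δ l0 l1 l2 l3 σ (fun p => w p.1 p.2.1 p.2.2) s x y) D1 t ∧
      HasDerivAt
        (fun s => Vfun α β γ δ l0 l1 l2 l3 σ (fun p => w p.1 p.2.1 p.2.2) t x s) D2 y ∧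
      (∀ s, HasDerivAt
        (fun r => Vfun α β γ δ l0 l1 l2 l3 σ (fun p => w p.1 p.2.1 p.2.2) t r y) (Dx s) s) ∧
      HasDerivAt Dx Dxx x ∧ D1 + x * D2 = Dxx := by
  have hsolW := fp_fderiv hsm hsol
  set W : ℝ × ℝ × ℝ → ℝ := fun p => w p.1 p.2.1 p.2.2 with hWdef
  have hQ2sm : ContDiff ℝ (⊤ : ℕ∞) (fun q => fderiv ℝ W q ((0:ℝ), (1:ℝ), (0:ℝ))) :=
    (hsm.fderiv_right (by simp)).clm_apply contDiff_const
  have hA2 : (γ * t + δ) ^ 2 ≠ 0 := pow_ne_zero 2 hA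
  have hA3 : (γ * t + δ) ^ 3 ≠ 0 := pow_ne_zero 3 hA
  -- ===== t-direction =====
  have hden : HasDerivAt (fun s : ℝ => γ * s + δ) γ t := by
    simpa using ((hasDerivAt_id t).const_mul γ).add_const δ
  have hXH : HasDerivAt (fun s : ℝ => x + 3 * l3 * s ^ 2 + 2 * l2 * s + l1)
      (6 * l3 * t + 2 * l2) t := by
    have := ((((hasDerivAt_pow 2 t).const_mul (3 * l3)).const_add x).add
      ((hasDerivAt_id t).const_mul (2 * l2))).add_const l1
    refine this.congr_deriv ?_
    norm_num
    ring
  have hYH : HasDerivAt (fun s : ℝ => y + l3 * s ^ 3 + l2 * s ^ 2 + l1 * s + l0)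
      (3 * l3 * t ^ 2 + 2 * l2 * t + l1) t := by
    have := (((((hasDerivAt_pow 3 t).const_mul l3).const_add y).add
      ((hasDerivAt_pow 2 t).const_mul l2)).add ((hasDerivAt_id t).const_mul l1)).add_const l0
    refine this.congr_deriv ?_
    norm_num
    ring
  have hpoly : HasDerivAt (fun s : ℝ => l2 * x - 3 * l3 * (y - s * x) + 3 * l3 ^ 2 * s ^ 3
      + 3 * l3 * l2 * s ^ 2 + l2 ^ 2 * s)
      (3 * l3 * x + 9 * l3 ^ 2 * t ^ 2 + 6 * l3 * l2 * t + l2 ^ 2) t := by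
    have := ((((hasDerivAt_const t (l2 * x)).sub
        (((hasDerivAt_const t y).sub ((hasDerivAt_id t).mul_const x)).const_mul (3 * l3))).add
        ((hasDerivAt_pow 3 t).const_mul (3 * l3 ^ 2))).add
        ((hasDerivAt_pow 2 t).const_mul (3 * l3 * l2))).add
        ((hasDerivAt_id t).const_mul (l2 ^ 2))
    refine this.congr_deriv ?_
    norm_num
    ring
  have hT : HasDerivAt (fun s : ℝ => (α * s + β) / (γ * s + δ)) (1 / (γ * t + δ) ^ 2) t := by
    have hnum : HasDerivAt (fun s : ℝ => α * s + β) α t := by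
      simpa using ((hasDerivAt_id t).const_mul α).add_const β
    have h2 := hnum.div hden hA
    rw [show α * (γ * t + δ) - (α * t + β) * γ = 1 by linear_combination hdet] at h2
    exact h2
  have hE := hpoly.add (((((hXH.pow 2).const_mul γ).neg.div hden hA).add
    (((hXH.const_mul (3 * γ ^ 2)).mul hYH).div (hden.pow 2) hA2)).sub
    (((hYH.pow 2).const_mul (3 * γ ^ 3)).div (hden.pow 3) hA3))
  have hWct := hasDerivAt_comp3 hsm
    (hT.prodMk (((hXH.div hden hA).sub ((hYH.const_mul (3 * γ)).div (hden.pow 2) hA2)).prodMk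
      (hYH.div (hden.pow 3) hA3)))
  rw [clm_apply3] at hWct
  have hD1 := ((((hden.pow 2).inv hA2).const_mul σ⁻¹).mul hE.exp).mul hWct
  -- ===== y-direction =====
  have hYHy : HasDerivAt (fun s : ℝ => s + l3 * t ^ 3 + l2 * t ^ 2 + l1 * t + l0) 1 y := by
    simpa using ((((hasDerivAt_id y).add_const (l3 * t ^ 3)).add_const
      (l2 * t ^ 2)).add_const (l1 * t)).add_const l0
  have hpolyy : HasDerivAt (fun s : ℝ => l2 * x - 3 * l3 * (s - t * x) + 3 * l3 ^ 2 * t ^ 3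
      + 3 * l3 * l2 * t ^ 2 + l2 ^ 2 * t) (-(3 * l3)) y := by
    have := ((((hasDerivAt_const y (l2 * x)).sub
      (((hasDerivAt_id y).sub_const (t * x)).const_mul (3 * l3))).add_const
      (3 * l3 ^ 2 * t ^ 3)).add_const (3 * l3 * l2 * t ^ 2)).add_const (l2 ^ 2 * t)
    refine this.congr_deriv ?_
    norm_num
  have hEy := hpolyy.add (((hasDerivAt_const y
      (-(γ * (x + 3 * l3 * t ^ 2 + 2 * l2 * t + l1) ^ 2) / (γ * t + δ))).add
    ((hYHy.const_mul (3 * γ ^ 2 * (x + 3 * l3 * t ^ 2 + 2 * l2 * t + l1))).div_const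
      ((γ * t + δ) ^ 2))).sub
    (((hYHy.pow 2).const_mul (3 * γ ^ 3)).div_const ((γ * t + δ) ^ 3)))
  have hWcy := hasDerivAt_comp3 hsm
    ((hasDerivAt_const y ((α * t + β) / (γ * t + δ))).prodMk
      (((hasDerivAt_const y ((x + 3 * l3 * t ^ 2 + 2 * l2 * t + l1) / (γ * t + δ))).sub
        ((hYHy.const_mul (3 * γ)).div_const ((γ * t + δ) ^ 2))).prodMk
      (hYHy.div_const ((γ * t + δ) ^ 3))))
  rw [clm_apply3] at hWcy
  have hD2 := ((hasDerivAt_const y (σ⁻¹ * ((γ * t + δ) ^ 2)⁻¹)).mul hEy.exp).mul hWcy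
  -- ===== x-direction =====
  have hXHx : ∀ s : ℝ, HasDerivAt (fun r : ℝ => r + 3 * l3 * t ^ 2 + 2 * l2 * t + l1) 1 s :=
    fun s => by simpa using (((hasDerivAt_id s).add_const
      (3 * l3 * t ^ 2)).add_const (2 * l2 * t)).add_const l1
  have hpolyx : ∀ s : ℝ, HasDerivAt (fun r : ℝ => l2 * r - 3 * l3 * (y - t * r)
      + 3 * l3 ^ 2 * t ^ 3 + 3 * l3 * l2 * t ^ 2 + l2 ^ 2 * t) (l2 + 3 * l3 * t) s := by
    intro s
    have := (((((hasDerivAt_id s).const_mul l2).sub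
      (((hasDerivAt_const s y).sub ((hasDerivAt_id s).const_mul t)).const_mul
        (3 * l3))).add_const (3 * l3 ^ 2 * t ^ 3)).add_const
        (3 * l3 * l2 * t ^ 2)).add_const (l2 ^ 2 * t)
    refine this.congr_deriv ?_
    norm_num
  have hExs : ∀ s : ℝ, HasDerivAt (fun r : ℝ =>
      (l2 * r - 3 * l3 * (y - t * r) + 3 * l3 ^ 2 * t ^ 3
          + 3 * l3 * l2 * t ^ 2 + l2 ^ 2 * t)
        + (-(γ * (r + 3 * l3 * t ^ 2 + 2 * l2 * t + l1) ^ 2) / (γ * t + δ)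
          + 3 * γ ^ 2 * (r + 3 * l3 * t ^ 2 + 2 * l2 * t + l1)
              * (y + l3 * t ^ 3 + l2 * t ^ 2 + l1 * t + l0) / (γ * t + δ) ^ 2
          - 3 * γ ^ 3 * (y + l3 * t ^ 3 + l2 * t ^ 2 + l1 * t + l0) ^ 2 / (γ * t + δ) ^ 3))
      (l2 + 3 * l3 * t - 2 * γ * (s + 3 * l3 * t ^ 2 + 2 * l2 * t + l1) / (γ * t + δ)
          + 3 * γ ^ 2 * (y + l3 * t ^ 3 + l2 * t ^ 2 + l1 * t + l0) / (γ * t + δ) ^ 2) s := by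
    intro s
    have := (hpolyx s).add ((((((hXHx s).pow 2).const_mul γ).neg.div_const (γ * t + δ)).add
      ((((hXHx s).const_mul (3 * γ ^ 2)).mul_const
        (y + l3 * t ^ 3 + l2 * t ^ 2 + l1 * t + l0)).div_const ((γ * t + δ) ^ 2))).sub_const
      (3 * γ ^ 3 * (y + l3 * t ^ 3 + l2 * t ^ 2 + l1 * t + l0) ^ 2 / (γ * t + δ) ^ 3))
    refine this.congr_deriv ?_
    norm_num
    ring
  have hCx : ∀ s : ℝ, HasDerivAt (fun r : ℝ => (((α * t + β) / (γ * t + δ),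
      (r + 3 * l3 * t ^ 2 + 2 * l2 * t + l1) / (γ * t + δ)
        - 3 * γ * (y + l3 * t ^ 3 + l2 * t ^ 2 + l1 * t + l0) / (γ * t + δ) ^ 2,
      (y + l3 * t ^ 3 + l2 * t ^ 2 + l1 * t + l0) / (γ * t + δ) ^ 3) : ℝ × ℝ × ℝ))
      ((0:ℝ), 1 / (γ * t + δ), (0:ℝ)) s := by
    intro s
    exact (hasDerivAt_const s ((α * t + β) / (γ * t + δ))).prodMk
      ((((hXHx s).div_const (γ * t + δ)).sub_const
        (3 * γ * (y + l3 * t ^ 3 + l2 * t ^ 2 + l1 * t + l0) / (γ * t + δ) ^ 2)).prodMk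
      (hasDerivAt_const s ((y + l3 * t ^ 3 + l2 * t ^ 2 + l1 * t + l0) / (γ * t + δ) ^ 3)))
  set Dx : ℝ → ℝ := fun s =>
    σ⁻¹ * ((γ * t + δ) ^ 2)⁻¹ *
      Real.exp ((l2 * s - 3 * l3 * (y - t * s) + 3 * l3 ^ 2 * t ^ 3
          + 3 * l3 * l2 * t ^ 2 + l2 ^ 2 * t)
        + (-(γ * (s + 3 * l3 * t ^ 2 + 2 * l2 * t + l1) ^ 2) / (γ * t + δ)
          + 3 * γ ^ 2 * (s + 3 * l3 * t ^ 2 + 2 * l2 * t + l1)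
              * (y + l3 * t ^ 3 + l2 * t ^ 2 + l1 * t + l0) / (γ * t + δ) ^ 2
          - 3 * γ ^ 3 * (y + l3 * t ^ 3 + l2 * t ^ 2 + l1 * t + l0) ^ 2 / (γ * t + δ) ^ 3)) *
      ((l2 + 3 * l3 * t - 2 * γ * (s + 3 * l3 * t ^ 2 + 2 * l2 * t + l1) / (γ * t + δ)
          + 3 * γ ^ 2 * (y + l3 * t ^ 3 + l2 * t ^ 2 + l1 * t + l0) / (γ * t + δ) ^ 2) *
        W ((α * t + β) / (γ * t + δ),
          (s + 3 * l3 * t ^ 2 + 2 * l2 * t + l1) / (γ * t + δ)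
            - 3 * γ * (y + l3 * t ^ 3 + l2 * t ^ 2 + l1 * t + l0) / (γ * t + δ) ^ 2,
          (y + l3 * t ^ 3 + l2 * t ^ 2 + l1 * t + l0) / (γ * t + δ) ^ 3)
      + 1 / (γ * t + δ) * fderiv ℝ W ((α * t + β) / (γ * t + δ),
          (s + 3 * l3 * t ^ 2 + 2 * l2 * t + l1) / (γ * t + δ)
            - 3 * γ * (y + l3 * t ^ 3 + l2 * t ^ 2 + l1 * t + l0) / (γ * t + δ) ^ 2,
          (y + l3 * t ^ 3 + l2 * t ^ 2 + l1 * t + l0) / (γ * t + δ) ^ 3)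
          ((0:ℝ), (1:ℝ), (0:ℝ))) with hDxdef
  have hDx : ∀ s, HasDerivAt
      (fun r => Vfun α β γ δ l0 l1 l2 l3 σ W t r y) (Dx s) s := by
    intro s
    have hWcx := hasDerivAt_comp3 hsm (hCx s)
    rw [clm_apply3] at hWcx
    have hb := ((hasDerivAt_const s (σ⁻¹ * ((γ * t + δ) ^ 2)⁻¹)).mul (hExs s).exp).mul hWcx
    refine hb.congr_deriv ?_
    simp only [hDxdef, Pi.mul_apply]
    ring
  -- second x-derivative
  have hWx := hasDerivAt_comp3 hsm (hCx x)
  rw [clm_apply3] at hWx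
  have hW2x := hasDerivAt_comp3 hQ2sm (hCx x)
  rw [clm_apply3] at hW2x
  have hExF : HasDerivAt (fun s : ℝ =>
      l2 + 3 * l3 * t - 2 * γ * (s + 3 * l3 * t ^ 2 + 2 * l2 * t + l1) / (γ * t + δ)
        + 3 * γ ^ 2 * (y + l3 * t ^ 3 + l2 * t ^ 2 + l1 * t + l0) / (γ * t + δ) ^ 2)
      (-(2 * γ / (γ * t + δ))) x := by
    have := ((((hXHx x).const_mul (2 * γ)).div_const (γ * t + δ)).const_sub
      (l2 + 3 * l3 * t)).add_const
      (3 * γ ^ 2 * (y + l3 * t ^ 3 + l2 * t ^ 2 + l1 * t + l0) / (γ * t + δ) ^ 2)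
    refine this.congr_deriv ?_
    norm_num
  have hDxx := ((hasDerivAt_const x (σ⁻¹ * ((γ * t + δ) ^ 2)⁻¹)).mul (hExs x).exp).mul
    ((hExF.mul hWx).add (hW2x.const_mul (1 / (γ * t + δ))))
  refine ⟨_, _, _, Dx, hD1, hD2, hDx, hDxx, ?_⟩
  have hs := hsolW ((α * t + β) / (γ * t + δ),
    (x + 3 * l3 * t ^ 2 + 2 * l2 * t + l1) / (γ * t + δ)
      - 3 * γ * (y + l3 * t ^ 3 + l2 * t ^ 2 + l1 * t + l0) / (γ * t + δ) ^ 2,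
    (y + l3 * t ^ 3 + l2 * t ^ 2 + l1 * t + l0) / (γ * t + δ) ^ 3)
  dsimp only at hs
  have hH1 : fderiv ℝ W ((α * t + β) / (γ * t + δ),
      (x + 3 * l3 * t ^ 2 + 2 * l2 * t + l1) / (γ * t + δ)
        - 3 * γ * (y + l3 * t ^ 3 + l2 * t ^ 2 + l1 * t + l0) / (γ * t + δ) ^ 2,
      (y + l3 * t ^ 3 + l2 * t ^ 2 + l1 * t + l0) / (γ * t + δ) ^ 3) (1, 0, 0)
      = fderiv ℝ (fun q => fderiv ℝ W q (0, 1, 0)) ((α * t + β) / (γ * t + δ),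
      (x + 3 * l3 * t ^ 2 + 2 * l2 * t + l1) / (γ * t + δ)
        - 3 * γ * (y + l3 * t ^ 3 + l2 * t ^ 2 + l1 * t + l0) / (γ * t + δ) ^ 2,
      (y + l3 * t ^ 3 + l2 * t ^ 2 + l1 * t + l0) / (γ * t + δ) ^ 3) (0, 1, 0)
      - ((x + 3 * l3 * t ^ 2 + 2 * l2 * t + l1) / (γ * t + δ)
        - 3 * γ * (y + l3 * t ^ 3 + l2 * t ^ 2 + l1 * t + l0) / (γ * t + δ) ^ 2)
        * fderiv ℝ W ((α * t + β) / (γ * t + δ),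
      (x + 3 * l3 * t ^ 2 + 2 * l2 * t + l1) / (γ * t + δ)
        - 3 * γ * (y + l3 * t ^ 3 + l2 * t ^ 2 + l1 * t + l0) / (γ * t + δ) ^ 2,
      (y + l3 * t ^ 3 + l2 * t ^ 2 + l1 * t + l0) / (γ * t + δ) ^ 3) (0, 0, 1) := by
    linarith [hs]
  simp only [Pi.mul_apply, Pi.add_apply, Pi.sub_apply, Pi.div_apply, Pi.neg_apply, Pi.pow_apply, Pi.inv_apply]
  rw [hH1]
  generalize fderiv ℝ (fun q => fderiv ℝ W q ((0:ℝ), (1:ℝ), (0:ℝ))) ((α * t + β) / (γ * t + δ), (x + 3 * l3 * t ^ 2 + 2 * l2 * t + l1) / (γ * t + δ) - 3 * γ * (y + l3 * t ^ 3 + l2 * t ^ 2 + l1 * t + l0) / (γ * t + δ) ^ 2, (y + l3 * t ^ 3 + l2 * t ^ 2 + l1 * t + l0) / (γ * t + δ) ^ 3) ((1:ℝ), (0:ℝ), (0:ℝ)) = J1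
  generalize fderiv ℝ (fun q => fderiv ℝ W q ((0:ℝ), (1:ℝ), (0:ℝ))) ((α * t + β) / (γ * t + δ), (x + 3 * l3 * t ^ 2 + 2 * l2 * t + l1) / (γ * t + δ) - 3 * γ * (y + l3 * t ^ 3 + l2 * t ^ 2 + l1 * t + l0) / (γ * t + δ) ^ 2, (y + l3 * t ^ 3 + l2 * t ^ 2 + l1 * t + l0) / (γ * t + δ) ^ 3) ((0:ℝ), (1:ℝ), (0:ℝ)) = J22
  generalize fderiv ℝ (fun q => fderiv ℝ W q ((0:ℝ), (1:ℝ), (0:ℝ))) ((α * t + β) / (γ * t + δ), (x + 3 * l3 * t ^ 2 + 2 * l2 * t + l1) / (γ * t + δ) - 3 * γ * (y + l3 * t ^ 3 + l2 * t ^ 2 + l1 * t + l0) / (γ * t + δ) ^ 2, (y + l3 * t ^ 3 + l2 * t ^ 2 + l1 * t + l0) / (γ * t + δ) ^ 3) ((0:ℝ), (0:ℝ), (1:ℝ)) = J2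
  generalize fderiv ℝ W ((α * t + β) / (γ * t + δ), (x + 3 * l3 * t ^ 2 + 2 * l2 * t + l1) / (γ * t + δ) - 3 * γ * (y + l3 * t ^ 3 + l2 * t ^ 2 + l1 * t + l0) / (γ * t + δ) ^ 2, (y + l3 * t ^ 3 + l2 * t ^ 2 + l1 * t + l0) / (γ * t + δ) ^ 3) ((0:ℝ), (1:ℝ), (0:ℝ)) = H2
  generalize fderiv ℝ W ((α * t + β) / (γ * t + δ), (x + 3 * l3 * t ^ 2 + 2 * l2 * t + l1) / (γ * t + δ) - 3 * γ * (y + l3 * t ^ 3 + l2 * t ^ 2 + l1 * t + l0) / (γ * t + δ) ^ 2, (y + l3 * t ^ 3 + l2 * t ^ 2 + l1 * t + l0) / (γ * t + δ) ^ 3) ((0:ℝ), (0:ℝ), (1:ℝ)) = H3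
  generalize W ((α * t + β) / (γ * t + δ), (x + 3 * l3 * t ^ 2 + 2 * l2 * t + l1) / (γ * t + δ) - 3 * γ * (y + l3 * t ^ 3 + l2 * t ^ 2 + l1 * t + l0) / (γ * t + δ) ^ 2, (y + l3 * t ^ 3 + l2 * t ^ 2 + l1 * t + l0) / (γ * t + δ) ^ 3) = H
  generalize Real.exp (l2 * x - 3 * l3 * (y - t * x) + 3 * l3 ^ 2 * t ^ 3 + 3 * l3 * l2 * t ^ 2 + l2 ^ 2 * t + (-(γ * (x + 3 * l3 * t ^ 2 + 2 * l2 * t + l1) ^ 2) / (γ * t + δ) + 3 * γ ^ 2 * (x + 3 * l3 * t ^ 2 + 2 * l2 * t + l1) * (y + l3 * t ^ 3 + l2 * t ^ 2 + l1 * t + l0) / (γ * t + δ) ^ 2 - 3 * γ ^ 3 * (y + l3 * t ^ 3 + l2 * t ^ 2 + l1 * t + l0) ^ 2 / (γ * t + δ) ^ 3)) = E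
  push_cast
  norm_num
  have eH : -(2 * (γ * t + δ) * γ) / ((γ * t + δ) ^ 2) + (3 * l3 * x + 9 * l3 ^ 2 * t ^ 2 + 6 * l3 * l2 * t + l2 ^ 2 + ((-(γ * (2 * (x + 3 * l3 * t ^ 2 + 2 * l2 * t + l1) * (6 * l3 * t + 2 * l2)) * (γ * t + δ)) + γ * (x + 3 * l3 * t ^ 2 + 2 * l2 * t + l1) ^ 2 * γ) / (γ * t + δ) ^ 2 + ((3 * γ ^ 2 * (6 * l3 * t + 2 * l2) * (y + l3 * t ^ 3 + l2 * t ^ 2 + l1 * t + l0) + 3 * γ ^ 2 * (x + 3 * l3 * t ^ 2 + 2 * l2 * t + l1) * (3 * l3 * t ^ 2 + 2 * l2 * t + l1)) * (γ * t + δ) ^ 2 - 3 * γ ^ 2 * (x + 3 * l3 * t ^ 2 + 2 * l2 * t + l1) * (y + l3 * t ^ 3 + l2 * t ^ 2 + l1 * t + l0) * (2 * (γ * t + δ) * γ)) / ((γ * t + δ) ^ 2) ^ 2 - (3 * γ ^ 3 * (2 * (y + l3 * t ^ 3 + l2 * t ^ 2 + l1 * t + l0) * (3 * l3 * t ^ 2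 + 2 * l2 * t + l1)) * (γ * t + δ) ^ 3 - 3 * γ ^ 3 * (y + l3 * t ^ 3 + l2 * t ^ 2 + l1 * t + l0) ^ 2 * (3 * (γ * t + δ) ^ 2 * γ)) / ((γ * t + δ) ^ 3) ^ 2)) + x * (-(3 * l3) + (3 * γ ^ 2 * (x + 3 * l3 * t ^ 2 + 2 * l2 * t + l1) / (γ * t + δ) ^ 2 - 3 * γ ^ 3 * (2 * (y + l3 * t ^ 3 + l2 * t ^ 2 + l1 * t + l0)) / (γ * t + δ) ^ 3))
      = (l2 + 3 * l3 * t - 2 * γ * (x + 3 * l3 * t ^ 2 + 2 * l2 * t + l1) / (γ * t + δ) + 3 * γ ^ 2 * (y + l3 * t ^ 3 + l2 * t ^ 2 + l1 * t + l0) / (γ * t + δ) ^ 2) * (l2 + 3 * l3 * t - 2 * γ * (x + 3 * l3 * t ^ 2 + 2 * l2 * t + l1) / (γ * t + δ) + 3 * γ ^ 2 * (y + l3 * t ^ 3 + l2 * t ^ 2 + l1 * t + l0) / (γ * t + δ) ^ 2) + (-(2 * γ / (γ * t + δ))) := by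
    field_simp
    ring
  have eH2 : (((6 * l3 * t + 2 * l2) * (γ * t + δ) - (x + 3 * l3 * t ^ 2 + 2 * l2 * t + l1) * γ) / (γ * t + δ) ^ 2 - (3 * γ * (3 * l3 * t ^ 2 + 2 * l2 * t + l1) * (γ * t + δ) ^ 2 - 3 * γ * (y + l3 * t ^ 3 + l2 * t ^ 2 + l1 * t + l0) * (2 * (γ * t + δ) * γ)) / ((γ * t + δ) ^ 2) ^ 2) + x * (-(3 * γ / (γ * t + δ) ^ 2))
      = (l2 + 3 * l3 * t - 2 * γ * (x + 3 * l3 * t ^ 2 + 2 * l2 * t + l1) / (γ * t + δ) + 3 * γ ^ 2 * (y + l3 * t ^ 3 + l2 * t ^ 2 + l1 * t + l0) / (γ * t + δ) ^ 2) * (γ * t + δ)⁻¹ + (l2 + 3 * l3 * t - 2 * γ * (x + 3 * l3 * t ^ 2 + 2 * l2 * t + l1) / (γ * t + δ) + 3 * γ ^ 2 * (y + l3 * t ^ 3 + l2 * t ^ 2 + l1 * t + l0) / (γ * t + δ) ^ 2) * (γ * t + δ)⁻¹ := by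
    set a := γ * t + δ with ha
    field_simp
    ring
  have eH3 : ((γ * t + δ) ^ 2)⁻¹ * (-((x + 3 * l3 * t ^ 2 + 2 * l2 * t + l1) / (γ * t + δ) - 3 * γ * (y + l3 * t ^ 3 + l2 * t ^ 2 + l1 * t + l0) / (γ * t + δ) ^ 2)) + (((3 * l3 * t ^ 2 + 2 * l2 * t + l1) * (γ * t + δ) ^ 3 - (y + l3 * t ^ 3 + l2 * t ^ 2 + l1 * t + l0) * (3 * (γ * t + δ) ^ 2 * γ)) / ((γ * t + δ) ^ 3) ^ 2) + x * ((γ * t + δ) ^ 3)⁻¹ = 0 := by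
    field_simp
    ring
  have hpow1 : (((γ * t + δ) ^ 2) ^ 2)⁻¹ = ((γ * t + δ) ^ 2)⁻¹ * ((γ * t + δ) ^ 2)⁻¹ := by
    rw [pow_two, mul_inv]
  have hpow2 : ((γ * t + δ) ^ 2)⁻¹ = (γ * t + δ)⁻¹ * (γ * t + δ)⁻¹ := by
    rw [pow_two, mul_inv]
  linear_combination (σ⁻¹ * ((γ * t + δ) ^ 2)⁻¹ * E * H) * eH
    + (σ⁻¹ * ((γ * t + δ) ^ 2)⁻¹ * E * H2) * eH2
    + (σ⁻¹ * ((γ * t + δ) ^ 2)⁻¹ * E * H3) * eH3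
    + (-(2 * γ * δ + 2 * γ ^ 2 * t) * σ⁻¹ * E * H) * hpow1
    + (σ⁻¹ * E * ((γ * t + δ) ^ 2)⁻¹ * J22) * hpow2

/-- Generation of solutions of the remarkable Fokker–Planck equation by
the action of its point symmetries: with `αδ − βγ = 1`, `σ ≠ 0` and smooth solutions `h`
and `f`, the function `u` defined by the formula below solves the equation at every point
where `γt + δ ≠ 0`. -/
theorem stmt18 (α β γ δ : ℝ) (hdet : α * δ - β * γ = 1)
    (l0 l1 l2 l3 σ : ℝ) (hσ : σ ≠ 0)
    (h f : ℝ → ℝ → ℝ → ℝ)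
    (hhsm : ContDiff ℝ (⊤ : ℕ∞) (fun p : ℝ × ℝ × ℝ => h p.1 p.2.1 p.2.2))
    (hfsm : ContDiff ℝ (⊤ : ℕ∞) (fun p : ℝ × ℝ × ℝ => f p.1 p.2.1 p.2.2))
    (hhsol : ∀ t x y : ℝ, FPAt h t x y)
    (hfsol : ∀ t x y : ℝ, FPAt f t x y)
    (u : ℝ → ℝ → ℝ → ℝ)
    (hu : ∀ t x y : ℝ,
      u t x y =
        σ⁻¹ * ((γ * t + δ) ^ 2)⁻¹ *
          Real.exp (l2 * x - 3 * l3 * (y - t * x) + 3 * l3 ^ 2 * t ^ 3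
            + 3 * l3 * l2 * t ^ 2 + l2 ^ 2 * t) *
          Real.exp
            (-(γ * (x + 3 * l3 * t ^ 2 + 2 * l2 * t + l1) ^ 2) / (γ * t + δ)
              + 3 * γ ^ 2 * (x + 3 * l3 * t ^ 2 + 2 * l2 * t + l1)
                  * (y + l3 * t ^ 3 + l2 * t ^ 2 + l1 * t + l0) / (γ * t + δ) ^ 2
              - 3 * γ ^ 3 * (y + l3 * t ^ 3 + l2 * t ^ 2 + l1 * t + l0) ^ 2
                  / (γ * t + δ) ^ 3) *
          h ((α * t + β) / (γ * t + δ))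
            ((x + 3 * l3 * t ^ 2 + 2 * l2 * t + l1) / (γ * t + δ)
              - 3 * γ * (y + l3 * t ^ 3 + l2 * t ^ 2 + l1 * t + l0) / (γ * t + δ) ^ 2)
            ((y + l3 * t ^ 3 + l2 * t ^ 2 + l1 * t + l0) / (γ * t + δ) ^ 3)
        - f t x y) :
    ∀ t x y : ℝ, γ * t + δ ≠ 0 → FPAt u t x y := by
  intro t x y hA
  obtain ⟨D1, D2, Dxx, Dx, hD1, hD2, hDx, hDxx, hDid⟩ :=
    key α β γ δ l0 l1 l2 l3 σ hdet hhsm hhsol t x y hA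
  obtain ⟨F1, F2, Fxx, Fx, hF1, hF2, hFx, hFxx, hFid⟩ := f_facts hfsm hfsol t x y
  have huV : ∀ a b c : ℝ, u a b c =
      Vfun α β γ δ l0 l1 l2 l3 σ (fun p => h p.1 p.2.1 p.2.2) a b c - f a b c := by
    intro a b c
    rw [hu]
    simp only [Vfun]
    conv_rhs => rw [Real.exp_add, ← mul_assoc]
  unfold FPAt
  have e1 : (fun s => u s x y)
      = fun s => Vfun α β γ δ l0 l1 l2 l3 σ (fun p => h p.1 p.2.1 p.2.2) s x y - f s x y :=
    funext fun s => huV s x y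
  have e2 : (fun s => u t x s)
      = fun s => Vfun α β γ δ l0 l1 l2 l3 σ (fun p => h p.1 p.2.1 p.2.2) t x s - f t x s :=
    funext fun s => huV t x s
  have e3 : (fun s => deriv (fun r => u t r y) s) = fun s => Dx s - Fx s := by
    funext s
    have e4 : (fun r => u t r y)
        = fun r => Vfun α β γ δ l0 l1 l2 l3 σ (fun p => h p.1 p.2.1 p.2.2) t r y - f t r y :=
      funext fun r => huV t r y
    rw [e4]
    exact ((hDx s).sub (hFx s)).deriv
  rw [e1, e2, e3, (hD1.fun_sub hF1).deriv, (hD2.fun_sub hF2).deriv, (hDxx.fun_sub hFxx).deriv]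
  linear_combination hDid - hFid
end
end

section
/- Let ε ∈ {−1, 1} and let ϑ : ℝ² → ℝ be a smooth solution of the heat equation ∂₁ϑ(z₁,z₂) = ∂₂²ϑ(z₁,z₂) on all of ℝ². Define, for t > 0 and (x,y) ∈ ℝ², u(t,x,y) := t^{−1/2} · exp(−x²/(4t)) · ϑ( t³/3 + 2εt − t⁻¹, 2y − (t + ε t⁻¹) x ). Then u satisfies the remarkable Fokker–Planck equation ∂_t u + x ∂_y u = ∂_x² u at every point (t,x,y) with t > 0. -/
noncomputable section

private lemma key2 (F : ℝ × ℝ → ℝ) (hF : ContDiff ℝ (⊤ : ℕ∞) F) {c₁ c₂ : ℝ → ℝ} {c₁' c₂' t : ℝ}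
    (h1 : HasDerivAt c₁ c₁' t) (h2 : HasDerivAt c₂ c₂' t) :
    HasDerivAt (fun s => F (c₁ s, c₂ s))
      (c₁' * fderiv ℝ F (c₁ t, c₂ t) (1, 0) + c₂' * fderiv ℝ F (c₁ t, c₂ t) (0, 1)) t := by
  have hfd : HasFDerivAt F (fderiv ℝ F (c₁ t, c₂ t)) (c₁ t, c₂ t) :=
    (hF.differentiable (by simp) (c₁ t, c₂ t)).hasFDerivAt
  have h := hfd.comp_hasDerivAt t (h1.prodMk h2)
  refine h.congr_deriv ?_
  have hv : ((c₁', c₂') : ℝ × ℝ) = c₁' • ((1:ℝ), (0:ℝ)) + c₂' • ((0:ℝ), (1:ℝ)) := by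
    simp [Prod.ext_iff]
  rw [hv, map_add, map_smul, map_smul, smul_eq_mul, smul_eq_mul]

/-- If `ϑ` is a smooth solution of the heat equation
`∂₁ϑ = ∂₂²ϑ` on `ℝ²` and `ε ∈ {−1, 1}`, then
`u(t,x,y) = t^{−1/2} e^{−x²/(4t)} ϑ(t³/3 + 2εt − t⁻¹, 2y − (t + εt⁻¹)x)` satisfies the
remarkable Fokker–Planck equation `∂_t u + x ∂_y u = ∂_x² u` at every point with `t > 0`. -/
theorem stmt19 (ε : ℝ) (hε : ε = -1 ∨ ε = 1)
    (ϑ : ℝ → ℝ → ℝ)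
    (hsm : ContDiff ℝ (⊤ : ℕ∞) (fun p : ℝ × ℝ => ϑ p.1 p.2))
    (hheat : ∀ z1 z2 : ℝ,
      deriv (fun s => ϑ s z2) z1 = deriv (fun s => deriv (fun r => ϑ z1 r) s) z2)
    (u : ℝ → ℝ → ℝ → ℝ)
    (hu : ∀ t x y : ℝ,
      u t x y = t ^ (-(1 : ℝ) / 2) * Real.exp (-(x ^ 2) / (4 * t))
        * ϑ (t ^ 3 / 3 + 2 * ε * t - t⁻¹) (2 * y - (t + ε * t⁻¹) * x)) :
    ∀ t x y : ℝ, 0 < t →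
      deriv (fun s => u s x y) t + x * deriv (fun s => u t x s) y
        = deriv (fun s => deriv (fun r => u t r y) s) x := by
  intro t x y ht
  have ht' : t ≠ 0 := ne_of_gt ht
  have hGsm : ContDiff ℝ (⊤ : ℕ∞)
      (fun p : ℝ × ℝ => fderiv ℝ (fun q : ℝ × ℝ => ϑ q.1 q.2) p ((0:ℝ), (1:ℝ))) :=
    (hsm.fderiv_right (by simp)).clm_apply contDiff_const
  -- heat equation in fderiv form
  have heat' : ∀ z1 z2 : ℝ,
      fderiv ℝ (fun q : ℝ × ℝ => ϑ q.1 q.2) (z1, z2) ((1:ℝ), (0:ℝ))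
        = fderiv ℝ (fun p : ℝ × ℝ => fderiv ℝ (fun q : ℝ × ℝ => ϑ q.1 q.2) p ((0:ℝ),(1:ℝ)))
            (z1, z2) ((0:ℝ),(1:ℝ)) := by
    intro z1 z2
    have hL : deriv (fun s => ϑ s z2) z1
        = fderiv ℝ (fun q : ℝ × ℝ => ϑ q.1 q.2) (z1, z2) ((1:ℝ), (0:ℝ)) := by
      simpa using (key2 _ hsm (hasDerivAt_id' z1) (hasDerivAt_const z1 z2)).deriv
    have hi : ∀ s2 : ℝ, deriv (fun r => ϑ z1 r) s2
        = fderiv ℝ (fun q : ℝ × ℝ => ϑ q.1 q.2) (z1, s2) ((0:ℝ), (1:ℝ)) := fun s2 => by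
      simpa using (key2 _ hsm (hasDerivAt_const s2 z1) (hasDerivAt_id' s2)).deriv
    have hR : deriv (fun s => deriv (fun r => ϑ z1 r) s) z2
        = fderiv ℝ (fun p : ℝ × ℝ => fderiv ℝ (fun q : ℝ × ℝ => ϑ q.1 q.2) p ((0:ℝ),(1:ℝ)))
            (z1, z2) ((0:ℝ),(1:ℝ)) := by
      have hfun : (fun s => deriv (fun r => ϑ z1 r) s)
          = fun s => fderiv ℝ (fun q : ℝ × ℝ => ϑ q.1 q.2) (z1, s) ((0:ℝ), (1:ℝ)) :=
        funext hi
      rw [hfun]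
      simpa using (key2 _ hGsm (hasDerivAt_const z2 z1) (hasDerivAt_id' z2)).deriv
    exact hL.symm.trans ((hheat z1 z2).trans hR)
  -- rewrite the rpow derivative exponent
  have hW : t ^ (-(1:ℝ)/2 - 1) = t ^ (-(1:ℝ)/2) / t := by
    rw [Real.rpow_sub ht, Real.rpow_one]
  -- basic building blocks
  have hA1 : HasDerivAt (fun s : ℝ => s ^ (-(1:ℝ)/2)) (-(1:ℝ)/2 * t ^ (-(1:ℝ)/2 - 1)) t :=
    Real.hasDerivAt_rpow_const (Or.inl ht')
  have hE1 : HasDerivAt (fun s : ℝ => Real.exp (-(x^2)/(4*s)))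
      (Real.exp (-(x^2)/(4*t)) * (x^2/(4*t^2))) t := by
    have h0 : HasDerivAt (fun s : ℝ => -(x^2)/4 * s⁻¹) (-(x^2)/4 * -(t^2)⁻¹) t :=
      (hasDerivAt_inv ht').const_mul _
    have hfun : (fun s : ℝ => -(x^2)/4 * s⁻¹) = fun s : ℝ => -(x^2)/(4*s) := by
      funext s; ring
    rw [hfun] at h0
    have h1 : HasDerivAt (fun s : ℝ => -(x^2)/(4*s)) (x^2/(4*t^2)) t := by
      convert h0 using 1; ring
    exact h1.exp
  have hp : HasDerivAt (fun s : ℝ => s^3/3 + 2*ε*s - s⁻¹)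
      (((3:ℕ) * t ^ 2)/3 + 2*ε*1 - -(t^2)⁻¹) t :=
    (((hasDerivAt_pow 3 t).div_const 3).add ((hasDerivAt_id' t).const_mul (2*ε))).sub
      (hasDerivAt_inv ht')
  have hq : HasDerivAt (fun s : ℝ => 2*y - (s + ε*s⁻¹)*x) (-((1 + ε * -(t^2)⁻¹) * x)) t :=
    (((hasDerivAt_id' t).add ((hasDerivAt_inv ht').const_mul ε)).mul_const x).const_sub (2*y)
  have hΘt := key2 _ hsm hp hq
  have hUt := (hA1.mul hE1).mul hΘt
  -- clean derivative in t
  have e1 : deriv (fun s : ℝ => s ^ (-(1:ℝ)/2) * Real.exp (-(x^2)/(4*s))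
        * ϑ (s^3/3 + 2*ε*s - s⁻¹) (2*y - (s + ε*s⁻¹)*x)) t
      = t ^ (-(1:ℝ)/2) * Real.exp (-(x^2)/(4*t))
        * ((x^2/(4*t^2) - 1/(2*t)) * ϑ (t^3/3 + 2*ε*t - t⁻¹) (2*y - (t + ε*t⁻¹)*x)
          + (t^2 + 2*ε + (t^2)⁻¹)
              * fderiv ℝ (fun q : ℝ × ℝ => ϑ q.1 q.2)
                  (t^3/3 + 2*ε*t - t⁻¹, 2*y - (t + ε*t⁻¹)*x) ((1:ℝ),(0:ℝ))
          - (1 - ε/t^2) * x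
              * fderiv ℝ (fun q : ℝ × ℝ => ϑ q.1 q.2)
                  (t^3/3 + 2*ε*t - t⁻¹, 2*y - (t + ε*t⁻¹)*x) ((0:ℝ),(1:ℝ))) := by
    refine Eq.trans hUt.deriv ?_
    beta_reduce
    rw [hW]
    push_cast
    simp only [Pi.mul_apply, Pi.sub_apply]
    ring
  -- derivative in y
  have hyy : HasDerivAt (fun s : ℝ => 2*s - (t + ε*t⁻¹)*x) (2*1) y :=
    ((hasDerivAt_id' y).const_mul 2).sub_const _
  have hΘy := key2 _ hsm (hasDerivAt_const y (t^3/3 + 2*ε*t - t⁻¹)) hyy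
  have hUy := hΘy.const_mul (t ^ (-(1:ℝ)/2) * Real.exp (-(x^2)/(4*t)))
  have e2 : deriv (fun s : ℝ => t ^ (-(1:ℝ)/2) * Real.exp (-(x^2)/(4*t))
        * ϑ (t^3/3 + 2*ε*t - t⁻¹) (2*s - (t + ε*t⁻¹)*x)) y
      = t ^ (-(1:ℝ)/2) * Real.exp (-(x^2)/(4*t))
        * (2 * fderiv ℝ (fun q : ℝ × ℝ => ϑ q.1 q.2)
            (t^3/3 + 2*ε*t - t⁻¹, 2*y - (t + ε*t⁻¹)*x) ((0:ℝ),(1:ℝ))) := by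
    refine Eq.trans hUy.deriv ?_
    beta_reduce
    ring
  -- derivative in x (first)
  have hEx : ∀ r : ℝ, HasDerivAt (fun r' : ℝ => Real.exp (-(r'^2)/(4*t)))
      (Real.exp (-(r^2)/(4*t)) * (-(r/(2*t)))) r := by
    intro r
    have h := ((hasDerivAt_pow 2 r).neg.div_const (4*t)).exp
    convert h using 1
    · funext r'; simp only [Pi.neg_apply]
    simp only [Pi.neg_apply]
    push_cast
    ring
  have hcur : ∀ r : ℝ, HasDerivAt (fun r' : ℝ => 2*y - (t + ε*t⁻¹)*r')
      (-((t + ε*t⁻¹)*1)) r := fun r =>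
    ((hasDerivAt_id' r).const_mul (t + ε*t⁻¹)).const_sub (2*y)
  have hΘx : ∀ r : ℝ, HasDerivAt
      (fun r' : ℝ => ϑ (t^3/3 + 2*ε*t - t⁻¹) (2*y - (t + ε*t⁻¹)*r'))
      (0 * fderiv ℝ (fun q : ℝ × ℝ => ϑ q.1 q.2)
          (t^3/3 + 2*ε*t - t⁻¹, 2*y - (t + ε*t⁻¹)*r) ((1:ℝ),(0:ℝ))
        + -((t + ε*t⁻¹)*1) * fderiv ℝ (fun q : ℝ × ℝ => ϑ q.1 q.2)
          (t^3/3 + 2*ε*t - t⁻¹, 2*y - (t + ε*t⁻¹)*r) ((0:ℝ),(1:ℝ))) r := fun r =>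
    key2 _ hsm (hasDerivAt_const r (t^3/3 + 2*ε*t - t⁻¹)) (hcur r)
  have hUx : ∀ r : ℝ, HasDerivAt
      (fun r' : ℝ => t ^ (-(1:ℝ)/2) * Real.exp (-(r'^2)/(4*t))
        * ϑ (t^3/3 + 2*ε*t - t⁻¹) (2*y - (t + ε*t⁻¹)*r'))
      (t ^ (-(1:ℝ)/2) * (Real.exp (-(r^2)/(4*t)) * (-(r/(2*t))))
          * ϑ (t^3/3 + 2*ε*t - t⁻¹) (2*y - (t + ε*t⁻¹)*r)
        + t ^ (-(1:ℝ)/2) * Real.exp (-(r^2)/(4*t))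
          * (0 * fderiv ℝ (fun q : ℝ × ℝ => ϑ q.1 q.2)
              (t^3/3 + 2*ε*t - t⁻¹, 2*y - (t + ε*t⁻¹)*r) ((1:ℝ),(0:ℝ))
            + -((t + ε*t⁻¹)*1) * fderiv ℝ (fun q : ℝ × ℝ => ϑ q.1 q.2)
              (t^3/3 + 2*ε*t - t⁻¹, 2*y - (t + ε*t⁻¹)*r) ((0:ℝ),(1:ℝ)))) r := fun r =>
    ((hEx r).const_mul (t ^ (-(1:ℝ)/2))).mul (hΘx r)
  have e3a : (fun s : ℝ => deriv (fun r : ℝ => t ^ (-(1:ℝ)/2) * Real.exp (-(r^2)/(4*t))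
        * ϑ (t^3/3 + 2*ε*t - t⁻¹) (2*y - (t + ε*t⁻¹)*r)) s)
      = fun s : ℝ => t ^ (-(1:ℝ)/2) * Real.exp (-(s^2)/(4*t))
          * (-(s/(2*t)) * ϑ (t^3/3 + 2*ε*t - t⁻¹) (2*y - (t + ε*t⁻¹)*s)
            - (t + ε*t⁻¹) * fderiv ℝ (fun q : ℝ × ℝ => ϑ q.1 q.2)
                (t^3/3 + 2*ε*t - t⁻¹, 2*y - (t + ε*t⁻¹)*s) ((0:ℝ),(1:ℝ))) := by
    funext s
    refine Eq.trans (hUx s).deriv ?_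
    ring
  have hlin : HasDerivAt (fun r : ℝ => -(r/(2*t))) (-(1/(2*t))) x :=
    ((hasDerivAt_id' x).div_const (2*t)).neg
  have hGpart := (key2 _ hGsm (hasDerivAt_const x (t^3/3 + 2*ε*t - t⁻¹)) (hcur x)).const_mul
    (t + ε*t⁻¹)
  have hS := (hlin.mul (hΘx x)).sub hGpart
  have hUxx := ((hEx x).const_mul (t ^ (-(1:ℝ)/2))).mul hS
  have e3 : deriv (fun s : ℝ => deriv (fun r : ℝ => t ^ (-(1:ℝ)/2) * Real.exp (-(r^2)/(4*t))
        * ϑ (t^3/3 + 2*ε*t - t⁻¹) (2*y - (t + ε*t⁻¹)*r)) s) x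
      = t ^ (-(1:ℝ)/2) * Real.exp (-(x^2)/(4*t))
        * ((x^2/(4*t^2) - 1/(2*t)) * ϑ (t^3/3 + 2*ε*t - t⁻¹) (2*y - (t + ε*t⁻¹)*x)
          + x/t * (t + ε*t⁻¹)
              * fderiv ℝ (fun q : ℝ × ℝ => ϑ q.1 q.2)
                  (t^3/3 + 2*ε*t - t⁻¹, 2*y - (t + ε*t⁻¹)*x) ((0:ℝ),(1:ℝ))
          + (t + ε*t⁻¹) * (t + ε*t⁻¹)
              * fderiv ℝ (fun p : ℝ × ℝ => fderiv ℝ (fun q : ℝ × ℝ => ϑ q.1 q.2) p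
                    ((0:ℝ),(1:ℝ)))
                  (t^3/3 + 2*ε*t - t⁻¹, 2*y - (t + ε*t⁻¹)*x) ((0:ℝ),(1:ℝ))) := by
    rw [e3a]
    refine Eq.trans hUxx.deriv ?_
    beta_reduce
    simp only [Pi.mul_apply, Pi.sub_apply]
    ring
  simp only [hu]
  rw [e1, e2, e3, heat']
  rcases hε with h | h <;> subst h <;> field_simp <;> ring
end
end
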